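/- arXiv:2102.10396 — 3 statements merged into one kernel-verified Lean document; each statement's English description precedes it below -/
import Mathlib

section
/- The function X ↦ log det(I + H X Hᴴ) is concave on the set of positive semidefinite Hermitian matrices X. -/
open Matrix ComplexOrder

/-!
Write `A = S * S` with `S = A^{1/2}` and `C = S⁻¹ * B * S⁻¹`, a positive definite matrix with
eigenvalues `μᵢ > 0`. Then `a • A + b • B = S * (a • 1 + b • C) * S`, so
`det (a • A + b • B) = det A * ∏ᵢ (a + b * μᵢ)` for all `a, b`, and concavity of `log det` on
positive definite matrices reduces to `b * log μ ≤ log (a + b * μ)`, the concavity of the scalar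
logarithm between `1` and `μ`. Finally `X ↦ 1 + H * X * Hᴴ` is affine and sends positive
semidefinite matrices to positive definite ones.
-/

lemma Real.mul_log_le_log_add_mul {x a b : ℝ} (hx : 0 < x) (ha : 0 ≤ a) (hb : 0 ≤ b)
    (hab : a + b = 1) : b * Real.log x ≤ Real.log (a + b * x) := by
  simpa using strictConcaveOn_log_Ioi.concaveOn.2 (Set.mem_Ioi.2 one_pos) (Set.mem_Ioi.2 hx)
    ha hb hab

namespace Matrix

variable {n 𝕜 : Type*} [Fintype n] [DecidableEq n] [RCLike 𝕜]

lemma IsHermitian.det_cfc {A : Matrix n n 𝕜} (hA : A.IsHermitian) (f : ℝ → ℝ) :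
    (cfc f A).det = ∏ i, (f (hA.eigenvalues i) : 𝕜) := by
  rw [hA.cfc_eq]
  simp [IsHermitian.cfc, -Unitary.conjStarAlgAut_apply]

lemma IsHermitian.det_smul_one_add_smul {A : Matrix n n 𝕜} (hA : A.IsHermitian) (a b : ℝ) :
    ((a : 𝕜) • 1 + (b : 𝕜) • A).det = ∏ i, ((a + b * hA.eigenvalues i : ℝ) : 𝕜) := by
  have h : cfc (fun x : ℝ => a + b * x) A = (a : 𝕜) • 1 + (b : 𝕜) • A := by
    rw [cfc_add .., cfc_const .., cfc_const_mul .., cfc_id' .., Algebra.algebraMap_eq_smul_one,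
      RCLike.real_smul_eq_coe_smul (K := 𝕜) a, RCLike.real_smul_eq_coe_smul (K := 𝕜) b]
  rw [← h, hA.det_cfc]

open scoped MatrixOrder in
lemma PosDef.exists_det_smul_add_smul_eq {A B : Matrix n n 𝕜} (hA : A.PosDef) (hB : B.PosDef) :
    ∃ (d : ℝ) (μ : n → ℝ), 0 < d ∧ (∀ i, 0 < μ i) ∧
      ∀ a b : ℝ, ((a : 𝕜) • A + (b : 𝕜) • B).det = ((d * ∏ i, (a + b * μ i) : ℝ) : 𝕜) := by
  set S := CFC.sqrt A
  have hSS : S * S = A := CFC.sqrt_mul_sqrt_self A hA.posSemidef.nonneg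
  have hS : IsUnit S := (CFC.isUnit_sqrt_iff A hA.posSemidef.nonneg).2 hA.isUnit
  have hSinv : (S⁻¹)ᴴ = S⁻¹ := (CFC.sqrt_nonneg A).posSemidef.isHermitian.inv
  set C := S⁻¹ * B * S⁻¹
  have hC : C.PosDef := by
    simpa only [hSinv] using hB.conjTranspose_mul_mul_same
      (mulVec_injective_iff_isUnit.2 ((isUnit_nonsing_inv_iff).2 hS))
  have hBC : S * C * S = B := by
    have hdet := (isUnit_iff_isUnit_det S).1 hS
    simp only [C, Matrix.mul_assoc, nonsing_inv_mul _ hdet, Matrix.mul_one,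
      mul_nonsing_inv_cancel_left _ _ hdet]
  refine ⟨∏ i, hA.1.eigenvalues i, hC.1.eigenvalues,
    Finset.prod_pos fun i _ => hA.eigenvalues_pos i, hC.eigenvalues_pos, fun a b => ?_⟩
  have hmix : (a : 𝕜) • A + (b : 𝕜) • B = S * ((a : 𝕜) • 1 + (b : 𝕜) • C) * S := by
    rw [← hSS, ← hBC]
    simp only [Matrix.mul_add, Matrix.add_mul, Matrix.mul_smul, Matrix.smul_mul, Matrix.mul_one]
  rw [hmix, det_mul_right_comm, det_mul, hSS, hA.1.det_eq_prod_eigenvalues,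
    hC.1.det_smul_one_add_smul]
  push_cast
  rfl

lemma PosDef.log_det_concave {A B : Matrix n n 𝕜} (hA : A.PosDef) (hB : B.PosDef) {a b : ℝ}
    (ha : 0 ≤ a) (hb : 0 ≤ b) (hab : a + b = 1) :
    a * Real.log (RCLike.re A.det) + b * Real.log (RCLike.re B.det)
      ≤ Real.log (RCLike.re ((a : 𝕜) • A + (b : 𝕜) • B).det) := by
  obtain ⟨d, μ, hd, hμ, hdet⟩ := hA.exists_det_smul_add_smul_eq hB
  have hdetA : A.det = d := by simpa using hdet 1 0
  have hdetB : B.det = (d * ∏ i, μ i : ℝ) := by simpa using hdet 0 1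
  have hterm : ∀ i, 0 < a + b * μ i := fun i => by
    simpa using (convex_Ioi (0 : ℝ)) (Set.mem_Ioi.2 one_pos) (hμ i) ha hb hab
  rw [hdetA, hdetB, hdet, RCLike.ofReal_re, RCLike.ofReal_re, RCLike.ofReal_re,
    Real.log_mul hd.ne' (Finset.prod_pos fun i _ => hμ i).ne',
    Real.log_mul hd.ne' (Finset.prod_pos fun i _ => hterm i).ne',
    Real.log_prod fun i _ => (hμ i).ne', Real.log_prod fun i _ => (hterm i).ne', mul_add b,
    Finset.mul_sum]
  have := Finset.sum_le_sum fun i (_ : i ∈ Finset.univ) =>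
    Real.mul_log_le_log_add_mul (hμ i) ha hb hab
  linear_combination this + Real.log d * hab

end Matrix

/-- The function `X ↦ log det (I + H X Hᴴ)` is concave on the set of positive
semidefinite Hermitian matrices. -/
theorem logdet_rate_concave {m n : ℕ} (H : Matrix (Fin m) (Fin n) ℂ)
    (X Y : Matrix (Fin n) (Fin n) ℂ) (hX : X.PosSemidef) (hY : Y.PosSemidef)
    (a b : ℝ) (ha : 0 ≤ a) (hb : 0 ≤ b) (hab : a + b = 1) :
    a * Real.log ((1 + H * X * Hᴴ).det.re) + b * Real.log ((1 + H * Y * Hᴴ).det.re)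
      ≤ Real.log ((1 + H * ((a : ℂ) • X + (b : ℂ) • Y) * Hᴴ).det.re) := by
  have habℂ : (a : ℂ) + b = 1 := by exact_mod_cast hab
  have hmix : 1 + H * ((a : ℂ) • X + (b : ℂ) • Y) * Hᴴ
      = (a : ℂ) • (1 + H * X * Hᴴ) + (b : ℂ) • (1 + H * Y * Hᴴ) := by
    simp only [Matrix.mul_add, Matrix.add_mul, Matrix.mul_smul, Matrix.smul_mul]
    linear_combination (norm := module) -habℂ • (1 : Matrix (Fin m) (Fin m) ℂ)
  rw [hmix]
  exact (PosDef.one.add_posSemidef (hX.mul_mul_conjTranspose_same H)).log_det_concave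
    (PosDef.one.add_posSemidef (hY.mul_mul_conjTranspose_same H)) ha hb hab
end

section
/- If H_bᴴ H_b ⪰ H_eᴴ H_e (i.e., H_bᴴH_b − H_eᴴH_e is positive semidefinite), then for every positive semidefinite X one has log det(I + H_b X H_bᴴ) ≥ log det(I + H_e X H_eᴴ); i.e., the secrecy rate is nonnegative in the degraded case. -/
/-!
Write `X = S * S` with `S = √X`. Sylvester's identity `det (1 + A B) = det (1 + B A)` turns
`det (1 + H X Hᴴ)` into `det (1 + S Hᴴ H S)`, and conjugation by `S` preserves the Loewner order,
so the degraded condition gives `1 + S Heᴴ He S ≤ 1 + S Hbᴴ Hb S`. The determinant is monotone on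
positive definite matrices: if `0 < A ≤ B` and `R = √A`, then `B = R (R⁻¹ B R⁻¹) R` with
`1 ≤ R⁻¹ B R⁻¹`, whose eigenvalues are all at least `1`.
-/

open Matrix ComplexOrder
open scoped MatrixOrder

namespace Matrix

variable {𝕜 n : Type*} [RCLike 𝕜] [Fintype n] [DecidableEq n]

lemma one_le_det_of_one_le {A : Matrix n n 𝕜} (hA : 1 ≤ A) : 1 ≤ A.det := by
  have hHerm : A.IsHermitian := by simpa using (le_iff.mp hA).isHermitian.add isHermitian_one
  have hspec : ∀ x ∈ spectrum ℝ A, 1 ≤ x := (CFC.one_le_iff A hHerm.isSelfAdjoint).mp hA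
  rw [hHerm.det_eq_prod_eigenvalues, ← RCLike.ofReal_prod, ← RCLike.ofReal_one,
    RCLike.ofReal_le_ofReal]
  exact Finset.one_le_prod fun i _ => hspec _ (hHerm.eigenvalues_mem_spectrum_real i)

lemma PosDef.det_le_det_of_le {A B : Matrix n n 𝕜} (hA : A.PosDef) (hAB : A ≤ B) :
    A.det ≤ B.det := by
  set R := CFC.sqrt A
  have hRR : R * R = A := CFC.sqrt_mul_sqrt_self A hA.posSemidef.nonneg
  have hR : IsUnit R.det := by
    refine isUnit_iff_ne_zero.mpr fun h => hA.det_pos.ne' ?_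
    rw [← hRR, det_mul, h, zero_mul]
  have hRinv : IsSelfAdjoint R⁻¹ := (CFC.sqrt_nonneg A).posSemidef.isHermitian.inv
  have hle : 1 ≤ R⁻¹ * B * R⁻¹ := by
    calc (1 : Matrix n n 𝕜) = R⁻¹ * A * R⁻¹ := by
          rw [← hRR, mul_assoc, mul_nonsing_inv_cancel_right _ _ hR, nonsing_inv_mul _ hR]
      _ ≤ R⁻¹ * B * R⁻¹ := hRinv.conjugate_le_conjugate hAB
  have hB : B = R * (R⁻¹ * B * R⁻¹) * R := by
    rw [← mul_assoc, ← mul_assoc, mul_nonsing_inv _ hR, one_mul, mul_assoc,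
      nonsing_inv_mul _ hR, mul_one]
  calc A.det ≤ A.det * (R⁻¹ * B * R⁻¹).det :=
        le_mul_of_one_le_right hA.det_pos.le (one_le_det_of_one_le hle)
    _ = B.det := by
        conv_rhs => rw [hB, det_mul, det_mul, mul_comm, ← mul_assoc, ← det_mul, hRR]

variable {m : Type*} [Fintype m] [DecidableEq m]

lemma det_one_add_mul_mul_conjTranspose {X : Matrix n n 𝕜} (hX : X.PosSemidef)
    (H : Matrix m n 𝕜) :
    (1 + H * X * Hᴴ).det = (1 + CFC.sqrt X * (Hᴴ * H) * CFC.sqrt X).det := by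
  set S := CFC.sqrt X
  have hSS : S * S = X := CFC.sqrt_mul_sqrt_self X hX.nonneg
  calc (1 + H * X * Hᴴ).det = (1 + (H * S) * (S * Hᴴ)).det := by
        rw [← hSS]; simp only [Matrix.mul_assoc]
    _ = (1 + (S * Hᴴ) * (H * S)).det := det_one_add_mul_comm _ _
    _ = _ := by simp only [Matrix.mul_assoc]

end Matrix

/-- In the degraded case `H_bᴴ H_b ⪰ H_eᴴ H_e`, the secrecy rate is nonnegative:
`log det (I + H_b X H_bᴴ) ≥ log det (I + H_e X H_eᴴ)` for every PSD `X`. -/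
theorem secrecy_rate_nonneg_of_degraded {Nr Ne Nt : ℕ}
    (Hb : Matrix (Fin Nr) (Fin Nt) ℂ) (He : Matrix (Fin Ne) (Fin Nt) ℂ)
    (hdeg : (Hbᴴ * Hb - Heᴴ * He).PosSemidef) :
    ∀ X : Matrix (Fin Nt) (Fin Nt) ℂ, X.PosSemidef →
      Real.log ((1 + He * X * Heᴴ).det.re) ≤ Real.log ((1 + Hb * X * Hbᴴ).det.re) := by
  intro X hX
  set S := CFC.sqrt X
  have hS : IsSelfAdjoint S := IsSelfAdjoint.of_nonneg (CFC.sqrt_nonneg X)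
  rw [det_one_add_mul_mul_conjTranspose hX, det_one_add_mul_mul_conjTranspose hX]
  have hpd : (1 + S * (Heᴴ * He) * S).PosDef :=
    PosDef.one.add_posSemidef <| by
      simpa only [show Sᴴ = S from hS] using
        (posSemidef_conjTranspose_mul_self He).conjTranspose_mul_mul_same S
  have hle : 1 + S * (Heᴴ * He) * S ≤ 1 + S * (Hbᴴ * Hb) * S :=
    add_le_add_right (hS.conjugate_le_conjugate (le_iff.mpr hdeg)) 1
  exact Real.log_le_log (RCLike.pos_iff.mp hpd.det_pos).1
    (RCLike.re_le_re (hpd.det_le_det_of_le hle))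
end

section
/- Water-filling lemma: let Φ̄ be Hermitian positive definite and H a complex matrix, and let Φ̄^{-1/2} Hᴴ H Φ̄^{-1/2} = V Σ Vᴴ be an eigendecomposition with V unitary and Σ = diag(σ₁,…,σ_n) ⪰ 0. Then X* = Φ̄^{-1/2} V Σ̄ Vᴴ Φ̄^{-1/2}, where Σ̄ = diag(max(1−1/σ_i,0)) (zero where σ_i = 0), maximizes L(X) = log det(I + H X Hᴴ) − tr(Φ̄ X) over Hermitian X ⪰ 0. -/
/-
`L` is concave, so `X*` is a maximizer as soon as it satisfies the KKT
conditions: with `A = I + H X* Hᴴ`, the multiplier `G = Φ̄ - Hᴴ A⁻¹ H` is positive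
semidefinite and `G X* = 0`. Indeed the tangent inequality
`log det B ≤ log det A + tr (A⁻¹ (B - A))` at `B = I + H X Hᴴ` gives
`L X ≤ L X* - tr (G X) ≤ L X*`.

The congruence `X ↦ U X Uᴴ` with `U = Vᴴ Φ̄^{1/2}` reduces everything to `Φ̄ = I` and the
channel `W = H Φ̄^{-1/2} V`, for which `Wᴴ W = Σ` is diagonal and `X*` becomes `Σ̄`. There
`1 + σᵢ Σ̄ᵢ = max σᵢ 1`, a push-through identity computes `Wᴴ A⁻¹ W = diag (σᵢ / max σᵢ 1)`,
and so `G = diag (1 - σᵢ / max σᵢ 1)`: nonnegative, and zero wherever `Σ̄ᵢ ≠ 0`.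
-/

open Matrix ComplexOrder

namespace Matrix

variable {m n : Type*} [Fintype m] [Fintype n] [DecidableEq m] [DecidableEq n]

theorem PosDef.log_det_re_le_trace_re_sub_card {A : Matrix n n ℂ} (hA : A.PosDef) :
    Real.log A.det.re ≤ A.trace.re - Fintype.card n := by
  have hev := hA.eigenvalues_pos
  have hdet : A.det.re = ∏ i, hA.isHermitian.eigenvalues i := by
    rw [hA.isHermitian.det_eq_prod_eigenvalues, ← RCLike.ofReal_prod]
    rfl
  have htrace : A.trace.re = ∑ i, hA.isHermitian.eigenvalues i := by
    rw [hA.isHermitian.trace_eq_sum_eigenvalues]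
    simp
  rw [hdet, htrace, Real.log_prod fun i _ => (hev i).ne']
  calc ∑ i, Real.log (hA.isHermitian.eigenvalues i) ≤ ∑ i, (hA.isHermitian.eigenvalues i - 1) :=
        Finset.sum_le_sum fun i _ => Real.log_le_sub_one_of_pos (hev i)
    _ = _ := by simp [Finset.sum_sub_distrib]

open scoped MatrixOrder in
theorem PosDef.log_det_re_le_log_det_re_add_trace_re {A B : Matrix n n ℂ} (hA : A.PosDef)
    (hB : B.PosDef) :
    Real.log B.det.re ≤ Real.log A.det.re + (A⁻¹ * (B - A)).trace.re := by
  set S := CFC.sqrt A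
  have hSS : S * S = A := CFC.sqrt_mul_sqrt_self A hA.posSemidef.nonneg
  have hS : S⁻¹ᴴ = S⁻¹ := (CFC.sqrt_nonneg A).posSemidef.isHermitian.inv.eq
  have hSdet : IsUnit S.det := by
    refine isUnit_of_mul_isUnit_left (y := S.det) ?_
    rw [← det_mul, hSS]
    exact hA.det_pos.ne'.isUnit
  have hSinv : IsUnit S⁻¹ := isUnit_nonsing_inv_iff.mpr ((isUnit_iff_isUnit_det _).mpr hSdet)
  set M := S⁻¹ * B * S⁻¹
  have hM : M.PosDef := by
    simpa [M, hS] using hB.conjTranspose_mul_mul_same (mulVec_injective_of_isUnit hSinv)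
  have hdet : B.det = A.det * M.det := by
    simp only [M, ← hSS, det_mul, det_nonsing_inv, Ring.inverse_eq_inv']
    field_simp [hSdet.ne_zero]
  have htrace : (A⁻¹ * (B - A)).trace = M.trace - Fintype.card n := by
    rw [mul_sub, nonsing_inv_mul _ (hA.det_pos.ne'.isUnit), trace_sub, trace_one, ← hSS,
      mul_inv_rev, ← trace_mul_cycle]
  have hdetA := Complex.lt_def.mp hA.det_pos
  have hMtr := hM.log_det_re_le_trace_re_sub_card
  rw [hdet, Complex.mul_re, ← hdetA.2, Complex.zero_im, zero_mul, sub_zero,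
    Real.log_mul hdetA.1.ne' (Complex.lt_def.mp hM.det_pos).1.ne', htrace]
  simp only [Complex.sub_re, Complex.natCast_re]
  linarith

open scoped MatrixOrder in
theorem PosSemidef.trace_mul_re_nonneg {G X : Matrix n n ℂ} (hG : G.PosSemidef)
    (hX : X.PosSemidef) : 0 ≤ (G * X).trace.re := by
  obtain ⟨B, rfl⟩ := CStarAlgebra.nonneg_iff_eq_star_mul_self.mp hX.nonneg
  rw [star_eq_conjTranspose, ← mul_assoc, trace_mul_comm, ← mul_assoc]
  exact (Complex.le_def.mp (hG.mul_mul_conjTranspose_same B).trace_nonneg).1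

theorem inv_one_add_mul_diagonal_mul {K : Type*} [Field K] {W : Matrix m n K}
    {W' : Matrix n m K} {d w : n → K} (hW : W' * W = diagonal d)
    (hdw : ∀ i, 1 + d i * w i ≠ 0) :
    (1 + W * diagonal w * W')⁻¹ = 1 - W * diagonal (fun i => w i / (1 + d i * w i)) * W' := by
  refine inv_eq_right_inv ?_
  have hdiag : diagonal w - diagonal (fun i => w i / (1 + d i * w i)) -
      diagonal w * diagonal d * diagonal (fun i => w i / (1 + d i * w i)) = 0 := by
    simp only [diagonal_mul_diagonal, diagonal_sub, ← diagonal_zero]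
    congr 1
    funext i
    have hwd : 1 + w i * d i ≠ 0 := mul_comm (d i) (w i) ▸ hdw i
    field_simp
    ring
  calc (1 + W * diagonal w * W') * (1 - W * diagonal (fun i => w i / (1 + d i * w i)) * W')
      = 1 + W * (diagonal w - diagonal (fun i => w i / (1 + d i * w i)) -
          diagonal w * (W' * W) * diagonal (fun i => w i / (1 + d i * w i))) * W' := by
        simp only [Matrix.add_mul, Matrix.mul_sub, Matrix.sub_mul, Matrix.one_mul,
          Matrix.mul_one, Matrix.mul_assoc]
        abel
    _ = 1 := by rw [hW, hdiag, Matrix.mul_zero, Matrix.zero_mul, add_zero]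

theorem mul_inv_one_add_mul_diagonal_mul_mul {K : Type*} [Field K] {W : Matrix m n K}
    {W' : Matrix n m K} {d w : n → K} (hW : W' * W = diagonal d)
    (hdw : ∀ i, 1 + d i * w i ≠ 0) :
    W' * (1 + W * diagonal w * W')⁻¹ * W = diagonal (fun i => d i / (1 + d i * w i)) := by
  rw [inv_one_add_mul_diagonal_mul hW hdw]
  calc W' * (1 - W * diagonal (fun i => w i / (1 + d i * w i)) * W') * W
      = W' * W - W' * W * diagonal (fun i => w i / (1 + d i * w i)) * (W' * W) := by
        simp only [Matrix.mul_sub, Matrix.sub_mul, Matrix.mul_one, Matrix.mul_assoc]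
    _ = diagonal (fun i => d i / (1 + d i * w i)) := by
        simp only [hW, diagonal_mul_diagonal, diagonal_sub]
        congr 1
        funext i
        field_simp [hdw i]
        ring

end Matrix

/-- The guard matters: `1 / 0 = 0` in Lean, so the bare formula would give `waterfill 0 = 1`. -/
noncomputable def waterfill (s : ℝ) : ℝ := if s = 0 then 0 else max (1 - 1 / s) 0

theorem waterfill_nonneg (s : ℝ) : 0 ≤ waterfill s := by
  unfold waterfill
  split_ifs <;> simp

theorem waterfill_eq_zero_of_le_one {s : ℝ} (hs₀ : 0 ≤ s) (hs₁ : s ≤ 1) : waterfill s = 0 := by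
  rcases hs₀.eq_or_lt with rfl | hs₀
  · simp [waterfill]
  · rw [waterfill, if_neg hs₀.ne', max_eq_right]
    rw [sub_nonpos, le_div_iff₀ hs₀, one_mul]
    exact hs₁

theorem one_add_mul_waterfill {s : ℝ} (hs : 0 ≤ s) : 1 + s * waterfill s = max s 1 := by
  rcases le_or_gt s 1 with hs₁ | hs₁
  · rw [waterfill_eq_zero_of_le_one hs hs₁, max_eq_right hs₁, mul_zero, add_zero]
  · have hs₀ : s ≠ 0 := by positivity
    rw [waterfill, if_neg hs₀, max_eq_left, max_eq_left hs₁.le]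
    · field_simp
      ring
    · rw [sub_nonneg, div_le_one₀ (by positivity)]
      exact hs₁.le

section

variable {m n : Type*} [Fintype m] [Fintype n] [DecidableEq m] [DecidableEq n]

noncomputable def logDetObjective (H : Matrix m n ℂ) (Φ X : Matrix n n ℂ) : ℝ :=
  Real.log ((1 + H * X * Hᴴ).det.re) - (Φ * X).trace.re

theorem logDetObjective_le_of_kkt {H : Matrix m n ℂ} {Φ X₀ : Matrix n n ℂ}
    (hX₀ : X₀.PosSemidef) (hG : (Φ - Hᴴ * (1 + H * X₀ * Hᴴ)⁻¹ * H).PosSemidef)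
    (hGX₀ : (Φ - Hᴴ * (1 + H * X₀ * Hᴴ)⁻¹ * H) * X₀ = 0) {X : Matrix n n ℂ}
    (hX : X.PosSemidef) : logDetObjective H Φ X ≤ logDetObjective H Φ X₀ := by
  set A := 1 + H * X₀ * Hᴴ
  set G := Φ - Hᴴ * A⁻¹ * H
  have hA : A.PosDef := PosDef.one.add_posSemidef (hX₀.mul_mul_conjTranspose_same H)
  have hB : (1 + H * X * Hᴴ).PosDef := PosDef.one.add_posSemidef (hX.mul_mul_conjTranspose_same H)
  have htrace : (A⁻¹ * (1 + H * X * Hᴴ - A)).trace =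
      (Φ * X).trace - (Φ * X₀).trace - (G * X).trace :=
    calc (A⁻¹ * (1 + H * X * Hᴴ - A)).trace = (A⁻¹ * (H * (X - X₀) * Hᴴ)).trace := by
          rw [add_sub_add_left_eq_sub, ← Matrix.sub_mul, ← Matrix.mul_sub]
      _ = ((Φ - G) * (X - X₀)).trace := by
          rw [sub_sub_cancel]
          simp only [← Matrix.mul_assoc]
          rw [trace_mul_comm]
          simp only [Matrix.mul_assoc]
      _ = (Φ * X).trace - (Φ * X₀).trace - (G * X).trace := by
          rw [sub_mul, mul_sub, mul_sub, hGX₀, sub_zero, trace_sub, trace_sub]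
  have hlogdet := hA.log_det_re_le_log_det_re_add_trace_re hB
  have hGX := hG.trace_mul_re_nonneg hX
  rw [htrace, Complex.sub_re, Complex.sub_re] at hlogdet
  unfold logDetObjective
  linarith

theorem logDetObjective_conj (H : Matrix m n ℂ) {T U : Matrix n n ℂ} (hTU : T * U = 1)
    (X : Matrix n n ℂ) :
    logDetObjective H (Uᴴ * U) X = logDetObjective (H * T) 1 (U * X * Uᴴ) := by
  have hX : T * (U * X * Uᴴ) * Tᴴ = X := by
    rw [← Matrix.mul_assoc, ← Matrix.mul_assoc, hTU, Matrix.one_mul, Matrix.mul_assoc,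
      ← conjTranspose_mul, hTU, conjTranspose_one, Matrix.mul_one]
  have hHX : H * T * (U * X * Uᴴ) * (H * T)ᴴ = H * X * Hᴴ :=
    calc H * T * (U * X * Uᴴ) * (H * T)ᴴ = H * (T * (U * X * Uᴴ) * Tᴴ) * Hᴴ := by
          simp only [conjTranspose_mul, Matrix.mul_assoc]
      _ = H * X * Hᴴ := by rw [hX]
  rw [logDetObjective, logDetObjective, hHX, Matrix.one_mul, trace_mul_cycle U X Uᴴ]

theorem logDetObjective_mul_self {R V : Matrix n n ℂ} (hR : R.PosDef)
    (hV : V ∈ unitaryGroup n ℂ) (H : Matrix m n ℂ) (X : Matrix n n ℂ) :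
    logDetObjective H (R * R) X =
      logDetObjective (H * (R⁻¹ * V)) 1 (Vᴴ * R * X * (Vᴴ * R)ᴴ) := by
  have hVV : V * Vᴴ = 1 := mem_unitaryGroup_iff.mp hV
  have hTU : R⁻¹ * V * (Vᴴ * R) = 1 := by
    rw [Matrix.mul_assoc, ← Matrix.mul_assoc V, hVV, Matrix.one_mul,
      nonsing_inv_mul R hR.det_pos.ne'.isUnit]
  have hRR : R * R = (Vᴴ * R)ᴴ * (Vᴴ * R) := by
    rw [conjTranspose_mul, conjTranspose_conjTranspose, hR.isHermitian.eq, Matrix.mul_assoc,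
      ← Matrix.mul_assoc V, hVV, Matrix.one_mul]
  rw [hRR, logDetObjective_conj H hTU]

theorem logDetObjective_one_le_waterfill {W : Matrix m n ℂ} {σ : n → ℝ} (hσ : ∀ i, 0 ≤ σ i)
    (hW : Wᴴ * W = diagonal (fun i => (σ i : ℂ))) {Y : Matrix n n ℂ} (hY : Y.PosSemidef) :
    logDetObjective W 1 Y ≤
      logDetObjective W 1 (diagonal (fun i => (waterfill (σ i) : ℂ))) := by
  have hmax : ∀ i, 1 + (σ i : ℂ) * (waterfill (σ i) : ℂ) = (max (σ i) 1 : ℝ) := fun i => by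
    rw [← one_add_mul_waterfill (hσ i)]
    push_cast
    rfl
  have hne : ∀ i, 1 + (σ i : ℂ) * (waterfill (σ i) : ℂ) ≠ 0 := fun i => by
    rw [hmax]
    exact_mod_cast (lt_max_of_lt_right one_pos).ne'
  have hG : 1 - Wᴴ * (1 + W * diagonal (fun i => (waterfill (σ i) : ℂ)) * Wᴴ)⁻¹ * W =
      diagonal (fun i => ((1 - σ i / max (σ i) 1 : ℝ) : ℂ)) := by
    rw [mul_inv_one_add_mul_diagonal_mul_mul hW hne, ← diagonal_one, diagonal_sub]
    congr 1
    funext i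
    rw [hmax]
    push_cast
    rfl
  refine logDetObjective_le_of_kkt
    (PosSemidef.diagonal fun i => Complex.zero_le_real.mpr (waterfill_nonneg (σ i))) ?_ ?_ hY
  · rw [hG]
    refine PosSemidef.diagonal fun i => Complex.zero_le_real.mpr ?_
    rw [sub_nonneg, div_le_one₀ (lt_max_of_lt_right one_pos)]
    exact le_max_left _ _
  · rw [hG, diagonal_mul_diagonal, ← diagonal_zero]
    congr 1
    funext i
    rcases le_or_gt (σ i) 1 with hσ₁ | hσ₁
    · rw [waterfill_eq_zero_of_le_one (hσ i) hσ₁]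
      simp
    · rw [max_eq_left hσ₁.le, div_self (by positivity)]
      simp

end

theorem waterfilling_matrix_general {m n : ℕ} (H : Matrix (Fin m) (Fin n) ℂ)
    (Φ : Matrix (Fin n) (Fin n) ℂ)
    (R : Matrix (Fin n) (Fin n) ℂ) (hR : R.PosDef) (hRR : R * R = Φ)
    (V : Matrix (Fin n) (Fin n) ℂ) (hV : V ∈ Matrix.unitaryGroup (Fin n) ℂ)
    (σ : Fin n → ℝ) (hσ : ∀ i, 0 ≤ σ i)
    (hEVD : R⁻¹ * (Hᴴ * H) * R⁻¹ = V * Matrix.diagonal (fun i => (σ i : ℂ)) * Vᴴ)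
    (Xstar : Matrix (Fin n) (Fin n) ℂ)
    (hXstar : Xstar = R⁻¹ * V *
      Matrix.diagonal (fun i => ((if σ i = 0 then 0 else max (1 - 1 / σ i) 0 : ℝ) : ℂ)) *
      Vᴴ * R⁻¹) :
    ∀ X : Matrix (Fin n) (Fin n) ℂ, X.PosSemidef →
      Real.log ((1 + H * X * Hᴴ).det.re) - (Φ * X).trace.re ≤
        Real.log ((1 + H * Xstar * Hᴴ).det.re) - (Φ * Xstar).trace.re := by
  intro X hX
  subst hRR
  have hVV : Vᴴ * V = 1 := mem_unitaryGroup_iff'.mp hV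
  have hRinv : R⁻¹ᴴ = R⁻¹ := hR.isHermitian.inv.eq
  have hUT : Vᴴ * R * (R⁻¹ * V) = 1 := by
    rw [Matrix.mul_assoc, ← Matrix.mul_assoc R, mul_nonsing_inv R hR.det_pos.ne'.isUnit,
      Matrix.one_mul, hVV]
  have hW : (H * (R⁻¹ * V))ᴴ * (H * (R⁻¹ * V)) = diagonal (fun i => (σ i : ℂ)) :=
    calc (H * (R⁻¹ * V))ᴴ * (H * (R⁻¹ * V)) = Vᴴ * (R⁻¹ * (Hᴴ * H) * R⁻¹) * V := by
          simp only [conjTranspose_mul, hRinv, Matrix.mul_assoc]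
      _ = diagonal (fun i => (σ i : ℂ)) := by
          rw [hEVD, ← Matrix.mul_assoc, ← Matrix.mul_assoc, hVV, Matrix.one_mul,
            Matrix.mul_assoc, hVV, Matrix.mul_one]
  have hXstar' : Vᴴ * R * Xstar * (Vᴴ * R)ᴴ = diagonal (fun i => (waterfill (σ i) : ℂ)) :=
    calc Vᴴ * R * Xstar * (Vᴴ * R)ᴴ = Vᴴ * R * (R⁻¹ * V) *
          diagonal (fun i => (waterfill (σ i) : ℂ)) * (Vᴴ * R * (R⁻¹ * V))ᴴ := by
          simp only [hXstar, conjTranspose_mul, hRinv, Matrix.mul_assoc]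
          rfl
      _ = diagonal (fun i => (waterfill (σ i) : ℂ)) := by
          rw [hUT, Matrix.one_mul, conjTranspose_one, Matrix.mul_one]
  change logDetObjective H (R * R) X ≤ logDetObjective H (R * R) Xstar
  rw [logDetObjective_mul_self hR hV, logDetObjective_mul_self hR hV, hXstar']
  exact logDetObjective_one_le_waterfill hσ hW (hX.mul_mul_conjTranspose_same _)

/-- Water-filling lemma: let `Φ̄` be Hermitian positive definite with positive
definite square root `R` (`R * R = Φ̄`), and let
`R⁻¹ Hᴴ H R⁻¹ = V (diagonal σ) Vᴴ` with `V` unitary and `σ i ≥ 0`. Then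
`X* = R⁻¹ V Σ̄ Vᴴ R⁻¹`, with `Σ̄ = diagonal (max (1 - 1/σ i) 0)` (zero where
`σ i = 0`), maximizes `L(X) = log det (I + H X Hᴴ) - tr (Φ̄ X)` over PSD `X`. -/
theorem waterfilling_matrix {m n : ℕ} (H : Matrix (Fin m) (Fin n) ℂ)
    (Φ : Matrix (Fin n) (Fin n) ℂ) (hΦ : Φ.PosDef)
    (R : Matrix (Fin n) (Fin n) ℂ) (hR : R.PosDef) (hRR : R * R = Φ)
    (V : Matrix (Fin n) (Fin n) ℂ) (hV : V ∈ Matrix.unitaryGroup (Fin n) ℂ)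
    (σ : Fin n → ℝ) (hσ : ∀ i, 0 ≤ σ i)
    (hEVD : R⁻¹ * (Hᴴ * H) * R⁻¹ = V * Matrix.diagonal (fun i => (σ i : ℂ)) * Vᴴ)
    (Xstar : Matrix (Fin n) (Fin n) ℂ)
    (hXstar : Xstar = R⁻¹ * V *
      Matrix.diagonal (fun i => ((if σ i = 0 then 0 else max (1 - 1 / σ i) 0 : ℝ) : ℂ)) *
      Vᴴ * R⁻¹) :
    ∀ X : Matrix (Fin n) (Fin n) ℂ, X.PosSemidef →
      Real.log ((1 + H * X * Hᴴ).det.re) - (Φ * X).trace.re ≤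
        Real.log ((1 + H * Xstar * Hᴴ).det.re) - (Φ * Xstar).trace.re :=
  waterfilling_matrix_general H Φ R hR hRR V hV σ hσ hEVD Xstar hXstar
end
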